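/- arXiv:solv-int/9808011 — 4 statements merged into one kernel-verified Lean document; each statement's English description precedes it below -/
import Mathlib

section
/- Let K ≥ 1, let v ∈ ℂ^K (a K×1 column matrix) and λ₀ ∈ ℂ be fixed. For each nonzero a ∈ ℂ let M(a) = fromBlocks [a] (−v*/conj(a)) v I_K and Λ = fromBlocks [λ₀] 0 0 (conj(λ₀)·I_K). Then M(a)·Λ·M(a)⁻¹ tends to the block-diagonal matrix fromBlocks [λ₀] 0 0 (conj(λ₀)·I_K) as a → ∞ in ℂ (i.e., along the filter |a| → ∞). -/
open Matrix Complex Filter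

lemma auxInv (K : ℕ) (v : Matrix (Fin K) (Fin 1) ℂ) (a t : ℂ) (ha : a ≠ 0)
    (hd0 : starRingEnd ℂ a * a + t ≠ 0)
    (hvv : vᴴ * v = t • (1 : Matrix (Fin 1) (Fin 1) ℂ)) :
    (Matrix.fromBlocks !![a] (-(starRingEnd ℂ a)⁻¹ • vᴴ) v (1 : Matrix (Fin K) (Fin K) ℂ))⁻¹ =
    Matrix.fromBlocks ((starRingEnd ℂ a / (starRingEnd ℂ a * a + t)) • 1)
      ((starRingEnd ℂ a * a + t)⁻¹ • vᴴ)
      ((-(starRingEnd ℂ a) / (starRingEnd ℂ a * a + t)) • v)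
      (1 - (starRingEnd ℂ a * a + t)⁻¹ • (v * vᴴ)) := by
  have hc0 : starRingEnd ℂ a ≠ 0 := by simpa using ha
  have hA : (!![a] : Matrix (Fin 1) (Fin 1) ℂ) = a • 1 := by
    ext i j; fin_cases i; fin_cases j; simp
  apply Matrix.inv_eq_right_inv
  rw [Matrix.fromBlocks_multiply, hA]
  rw [show (1 : Matrix (Fin 1 ⊕ Fin K) (Fin 1 ⊕ Fin K) ℂ) = Matrix.fromBlocks 1 0 0 1 from
    (Matrix.fromBlocks_one).symm]
  rw [Matrix.fromBlocks_inj]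
  refine ⟨?_, ?_, ?_, ?_⟩ <;>
    simp only [Matrix.smul_mul, Matrix.mul_smul, Matrix.one_mul, Matrix.mul_one,
      Matrix.mul_sub, Matrix.sub_mul, ← Matrix.mul_assoc, hvv, Matrix.smul_mul,
      Matrix.one_mul] <;>
    match_scalars <;> field_simp <;> ring

lemma auxProd (K : ℕ) (v : Matrix (Fin K) (Fin 1) ℂ) (a t l : ℂ) (ha : a ≠ 0)
    (hd0 : starRingEnd ℂ a * a + t ≠ 0)
    (hvv : vᴴ * v = t • (1 : Matrix (Fin 1) (Fin 1) ℂ)) :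
    Matrix.fromBlocks !![a] (-(starRingEnd ℂ a)⁻¹ • vᴴ) v (1 : Matrix (Fin K) (Fin K) ℂ) *
      Matrix.fromBlocks !![l] 0 0 (starRingEnd ℂ l • (1 : Matrix (Fin K) (Fin K) ℂ)) *
      (Matrix.fromBlocks !![a] (-(starRingEnd ℂ a)⁻¹ • vᴴ) v (1 : Matrix (Fin K) (Fin K) ℂ))⁻¹ =
    Matrix.fromBlocks
      ((l + (starRingEnd ℂ l - l) * t * (starRingEnd ℂ a * a + t)⁻¹) • 1)
      (((l - starRingEnd ℂ l) * (a * (starRingEnd ℂ a * a + t)⁻¹)) • vᴴ)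
      (((l - starRingEnd ℂ l) * (starRingEnd ℂ a * (starRingEnd ℂ a * a + t)⁻¹)) • v)
      (starRingEnd ℂ l • 1 + ((l - starRingEnd ℂ l) * (starRingEnd ℂ a * a + t)⁻¹) • (v * vᴴ)) := by
  have hc0 : starRingEnd ℂ a ≠ 0 := by simpa using ha
  have hA : (!![a] : Matrix (Fin 1) (Fin 1) ℂ) = a • 1 := by
    ext i j; fin_cases i; fin_cases j; simp
  have hL : (!![l] : Matrix (Fin 1) (Fin 1) ℂ) = l • 1 := by
    ext i j; fin_cases i; fin_cases j; simp
  rw [auxInv K v a t ha hd0 hvv, Matrix.fromBlocks_multiply, Matrix.fromBlocks_multiply,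
    hA, hL, Matrix.fromBlocks_inj]
  refine ⟨?_, ?_, ?_, ?_⟩ <;>
    simp only [Matrix.smul_mul, Matrix.mul_smul, Matrix.one_mul, Matrix.mul_one,
      Matrix.mul_sub, Matrix.sub_mul, Matrix.mul_zero, Matrix.zero_mul, add_zero, zero_add,
      ← Matrix.mul_assoc, hvv, Matrix.smul_mul, Matrix.one_mul] <;>
    match_scalars <;> field_simp <;> ring

/-- As `a → ∞`, `M(a) Λ M(a)⁻¹` tends to the block diagonal matrix. -/
theorem stmt_2 (K : ℕ) (hK : 1 ≤ K) (v : Matrix (Fin K) (Fin 1) ℂ) (lam0 : ℂ)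
    (M : ℂ → Matrix (Fin 1 ⊕ Fin K) (Fin 1 ⊕ Fin K) ℂ)
    (hM : ∀ a : ℂ, a ≠ 0 → M a = Matrix.fromBlocks !![a] (-(starRingEnd ℂ a)⁻¹ • vᴴ) v
      (1 : Matrix (Fin K) (Fin K) ℂ))
    (Λ : Matrix (Fin 1 ⊕ Fin K) (Fin 1 ⊕ Fin K) ℂ)
    (hΛ : Λ = Matrix.fromBlocks !![lam0] 0 0 (starRingEnd ℂ lam0 • (1 : Matrix (Fin K) (Fin K) ℂ))) :
    Filter.Tendsto (fun a : ℂ => M a * Λ * (M a)⁻¹)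
      (Bornology.cobounded ℂ ⊓ Filter.principal {a : ℂ | a ≠ 0})
      (nhds (Matrix.fromBlocks !![lam0] 0 0
        (starRingEnd ℂ lam0 • (1 : Matrix (Fin K) (Fin K) ℂ)))) := by
  set F := Bornology.cobounded ℂ ⊓ Filter.principal {a : ℂ | a ≠ 0} with hF
  set tr : ℝ := ∑ i, Complex.normSq (v i 0) with htr
  have htr0 : 0 ≤ tr := Finset.sum_nonneg fun i _ => Complex.normSq_nonneg _
  set T : ℂ := (tr : ℂ) with hT
  have hvv : vᴴ * v = T • (1 : Matrix (Fin 1) (Fin 1) ℂ) := by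
    ext i j; fin_cases i; fin_cases j
    simp [Matrix.mul_apply, Complex.normSq_eq_conj_mul_self, hT, htr]
  have hdre : ∀ a : ℂ, starRingEnd ℂ a * a + T = ((Complex.normSq a + tr : ℝ) : ℂ) := by
    intro a
    rw [← Complex.normSq_eq_conj_mul_self, hT, Complex.ofReal_add]
  have hd0 : ∀ a : ℂ, a ≠ 0 → starRingEnd ℂ a * a + T ≠ 0 := by
    intro a ha
    rw [hdre a]
    have h1 : 0 < Complex.normSq a := Complex.normSq_pos.mpr ha
    exact_mod_cast (by linarith : (0:ℝ) < Complex.normSq a + tr).ne'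
  have hdnorm : ∀ a : ℂ, ‖starRingEnd ℂ a * a + T‖ = Complex.normSq a + tr := by
    intro a
    rw [hdre a, Complex.norm_real, Real.norm_of_nonneg (add_nonneg (Complex.normSq_nonneg a) htr0)]
  have h_ne : ∀ᶠ a in F, a ≠ 0 := by
    rw [hF, Filter.eventually_inf_principal]
    exact Filter.Eventually.of_forall fun a h => h
  -- norm inverse tends to zero
  have hninv : Filter.Tendsto (fun a : ℂ => ‖a‖⁻¹) F (nhds 0) :=
    tendsto_inv_atTop_zero.comp (tendsto_norm_cobounded_atTop.mono_left inf_le_left)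
  have hbound : ∀ a : ℂ, a ≠ 0 → ‖(starRingEnd ℂ a * a + T)⁻¹‖ ≤ ‖a‖⁻¹ * ‖a‖⁻¹ := by
    intro a ha
    rw [norm_inv, hdnorm a]
    have h1 : 0 < Complex.normSq a := Complex.normSq_pos.mpr ha
    have h2 : Complex.normSq a = ‖a‖ * ‖a‖ := by
      rw [Complex.normSq_eq_norm_sq]; ring_nf
    rw [← mul_inv, ← h2]
    exact inv_anti₀ h1 (by linarith)
  have hdinv : Filter.Tendsto (fun a : ℂ => (starRingEnd ℂ a * a + T)⁻¹) F (nhds 0) := by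
    rw [tendsto_zero_iff_norm_tendsto_zero]
    apply squeeze_zero' (Filter.Eventually.of_forall fun a => norm_nonneg _)
      (h_ne.mono fun a ha => hbound a ha)
    simpa using hninv.mul hninv
  have habound : ∀ a : ℂ, a ≠ 0 → ‖a * (starRingEnd ℂ a * a + T)⁻¹‖ ≤ ‖a‖⁻¹ := by
    intro a ha
    rw [norm_mul]
    calc ‖a‖ * ‖(starRingEnd ℂ a * a + T)⁻¹‖ ≤ ‖a‖ * (‖a‖⁻¹ * ‖a‖⁻¹) := by
          exact mul_le_mul_of_nonneg_left (hbound a ha) (norm_nonneg _)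
      _ = ‖a‖⁻¹ := by
          field_simp
  have hadinv : Filter.Tendsto (fun a : ℂ => a * (starRingEnd ℂ a * a + T)⁻¹) F (nhds 0) := by
    rw [tendsto_zero_iff_norm_tendsto_zero]
    exact squeeze_zero' (Filter.Eventually.of_forall fun a => norm_nonneg _)
      (h_ne.mono fun a ha => habound a ha) hninv
  have hcdinv : Filter.Tendsto
      (fun a : ℂ => starRingEnd ℂ a * (starRingEnd ℂ a * a + T)⁻¹) F (nhds 0) := by
    rw [tendsto_zero_iff_norm_tendsto_zero]
    apply squeeze_zero' (Filter.Eventually.of_forall fun a => norm_nonneg _)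
      (h_ne.mono fun a ha => ?_) hninv
    calc ‖starRingEnd ℂ a * (starRingEnd ℂ a * a + T)⁻¹‖
        = ‖a * (starRingEnd ℂ a * a + T)⁻¹‖ := by
          rw [norm_mul, norm_mul, RCLike.norm_conj]
      _ ≤ ‖a‖⁻¹ := habound a ha
  -- scalar coefficient limits
  have h1 : Filter.Tendsto
      (fun a : ℂ => lam0 + (starRingEnd ℂ lam0 - lam0) * T * (starRingEnd ℂ a * a + T)⁻¹)
      F (nhds lam0) := by
    simpa using tendsto_const_nhds.add (hdinv.const_mul ((starRingEnd ℂ lam0 - lam0) * T))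
  have h2 : Filter.Tendsto
      (fun a : ℂ => (lam0 - starRingEnd ℂ lam0) * (a * (starRingEnd ℂ a * a + T)⁻¹))
      F (nhds 0) := by
    simpa using hadinv.const_mul (lam0 - starRingEnd ℂ lam0)
  have h3 : Filter.Tendsto
      (fun a : ℂ => (lam0 - starRingEnd ℂ lam0) * (starRingEnd ℂ a * (starRingEnd ℂ a * a + T)⁻¹))
      F (nhds 0) := by
    simpa using hcdinv.const_mul (lam0 - starRingEnd ℂ lam0)
  have h4 : Filter.Tendsto
      (fun a : ℂ => (lam0 - starRingEnd ℂ lam0) * (starRingEnd ℂ a * a + T)⁻¹)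
      F (nhds 0) := by
    simpa using hdinv.const_mul (lam0 - starRingEnd ℂ lam0)
  -- continuity of block assembly
  have hcont : Continuous (fun p : ℂ × ℂ × ℂ × ℂ =>
      Matrix.fromBlocks (p.1 • (1 : Matrix (Fin 1) (Fin 1) ℂ)) (p.2.1 • vᴴ) (p.2.2.1 • v)
        (starRingEnd ℂ lam0 • (1 : Matrix (Fin K) (Fin K) ℂ) + p.2.2.2 • (v * vᴴ))) := by
    apply Continuous.matrix_fromBlocks
    · exact continuous_fst.smul continuous_const
    · exact (continuous_snd.fst).smul continuous_const
    · exact (continuous_snd.snd.fst).smul continuous_const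
    · exact continuous_const.add ((continuous_snd.snd.snd).smul continuous_const)
  have hptend : Filter.Tendsto (fun a : ℂ =>
      ((lam0 + (starRingEnd ℂ lam0 - lam0) * T * (starRingEnd ℂ a * a + T)⁻¹),
       ((lam0 - starRingEnd ℂ lam0) * (a * (starRingEnd ℂ a * a + T)⁻¹),
        ((lam0 - starRingEnd ℂ lam0) * (starRingEnd ℂ a * (starRingEnd ℂ a * a + T)⁻¹),
         (lam0 - starRingEnd ℂ lam0) * (starRingEnd ℂ a * a + T)⁻¹))))
      F (nhds (lam0, (0, (0, 0)))) :=
    h1.prodMk_nhds (h2.prodMk_nhds (h3.prodMk_nhds h4))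
  have hmain := (hcont.tendsto (lam0, (0, (0, 0)))).comp hptend
  have hL : (!![lam0] : Matrix (Fin 1) (Fin 1) ℂ) = lam0 • 1 := by
    ext i j; fin_cases i; fin_cases j; simp
  have hgoal : Matrix.fromBlocks !![lam0] 0 0
        (starRingEnd ℂ lam0 • (1 : Matrix (Fin K) (Fin K) ℂ)) =
      Matrix.fromBlocks ((lam0 : ℂ) • 1) ((0 : ℂ) • vᴴ) ((0 : ℂ) • v)
        (starRingEnd ℂ lam0 • (1 : Matrix (Fin K) (Fin K) ℂ) + (0 : ℂ) • (v * vᴴ)) := by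
    simp [hL]
  rw [hgoal]
  refine hmain.congr' ?_
  refine h_ne.mono fun a ha => ?_
  show _ = M a * Λ * (M a)⁻¹
  rw [hM a ha, hΛ]
  exact (auxProd K v a T lam0 ha (hd0 a ha) hvv).symm
end

section
/- Let K ≥ 1 and let λ_α, λ_β be complex numbers with Im λ_α ≠ 0, Im λ_β ≠ 0, λ_α ≠ λ_β, and λ_β ≠ conj(λ_α). Let κ_α, κ_β ∈ ℂ^K be nonzero vectors and set θ = ⟨κ_α, κ_β⟩ / √(‖κ_α‖²·‖κ_β‖²), where ⟨·,·⟩ is the standard Hermitian inner product on ℂ^K. Then 1 − 4·(Im λ_α)·(Im λ_β)·|θ|² / |λ_β − conj(λ_α)|² > 0. -/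
/-!
Cauchy–Schwarz gives `|θ| ≤ 1`, and `|λ_β - conj λ_α|² = |λ_β - λ_α|² + 4 Im λ_α Im λ_β`.
So when `Im λ_α Im λ_β > 0` the subtracted quotient is at most
`4 Im λ_α Im λ_β / (|λ_β - λ_α|² + 4 Im λ_α Im λ_β) < 1`, and otherwise it is `≤ 0`.
-/

open Complex

theorem norm_inner_div_sqrt_sq_mul_sq_le_one {E : Type*} [SeminormedAddCommGroup E]
    [InnerProductSpace ℂ E] (x y : E) :
    ‖(inner ℂ x y : ℂ) / (Real.sqrt (‖x‖ ^ 2 * ‖y‖ ^ 2) : ℂ)‖ ≤ 1 := by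
  rw [← mul_pow, Real.sqrt_sq (by positivity), norm_div, Complex.norm_real, Real.norm_eq_abs,
    abs_of_nonneg (by positivity)]
  exact div_le_one_of_le₀ (norm_inner_le_norm x y) (by positivity)

theorem Complex.sq_norm_sub_conj (z w : ℂ) :
    ‖z - starRingEnd ℂ w‖ ^ 2 = ‖z - w‖ ^ 2 + 4 * w.im * z.im := by
  simp only [Complex.sq_norm, Complex.normSq_apply, sub_re, sub_im, conj_re, conj_im]
  ring

theorem stmt_5_general (K : ℕ) (lamα lamβ : ℂ)
    (hne : lamα ≠ lamβ)
    (hconj : lamβ ≠ starRingEnd ℂ lamα)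
    (κα κβ : EuclideanSpace ℂ (Fin K))
    (θ : ℂ)
    (hθ : θ = (inner ℂ κα κβ : ℂ) / (Real.sqrt (‖κα‖ ^ 2 * ‖κβ‖ ^ 2) : ℂ)) :
    1 - 4 * lamα.im * lamβ.im * ‖θ‖ ^ 2
      / ‖lamβ - starRingEnd ℂ lamα‖ ^ 2 > 0 := by
  have hθ_le : ‖θ‖ ^ 2 ≤ 1 :=
    pow_le_one₀ (norm_nonneg θ) (hθ ▸ norm_inner_div_sqrt_sq_mul_sq_le_one κα κβ)
  have hdiff : 0 < ‖lamβ - lamα‖ ^ 2 := by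
    have := sub_ne_zero.mpr hne.symm
    positivity
  have hden : 0 < ‖lamβ - starRingEnd ℂ lamα‖ ^ 2 := by
    have := sub_ne_zero.mpr hconj
    positivity
  rw [gt_iff_lt, sub_pos, div_lt_one hden, Complex.sq_norm_sub_conj]
  rw [Complex.sq_norm_sub_conj] at hden
  rcases le_or_gt (lamα.im * lamβ.im) 0 with h | h
  · nlinarith [mul_nonpos_of_nonpos_of_nonneg h (sq_nonneg ‖θ‖)]
  · nlinarith [mul_le_mul_of_nonneg_left hθ_le h.le]

/-- Positivity of `g_{αβ} = 1 − 4 Im λ_α Im λ_β |θ|² / |λ_β − conj λ_α|²`. -/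
theorem stmt_5 (K : ℕ) (hK : 1 ≤ K) (lamα lamβ : ℂ)
    (hα : lamα.im ≠ 0) (hβ : lamβ.im ≠ 0) (hne : lamα ≠ lamβ)
    (hconj : lamβ ≠ starRingEnd ℂ lamα)
    (κα κβ : EuclideanSpace ℂ (Fin K)) (hκα : κα ≠ 0) (hκβ : κβ ≠ 0)
    (θ : ℂ)
    (hθ : θ = (inner ℂ κα κβ : ℂ) / (Real.sqrt (‖κα‖ ^ 2 * ‖κβ‖ ^ 2) : ℂ)) :
    1 - 4 * lamα.im * lamβ.im * ‖θ‖ ^ 2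
      / ‖lamβ - starRingEnd ℂ lamα‖ ^ 2 > 0 :=
  stmt_5_general K lamα lamβ hne hconj κα κβ θ hθ
end

section
/- Let N, K ≥ 1. Let λ₁, λ₂ be complex numbers such that λ_β ≠ conj(λ_α) for all α, β ∈ {1, 2}. Let E₁, E₂ be invertible diagonal N×N complex matrices, fix l ∈ Fin N and vectors κ₁, κ₂ ∈ ℂ^K, and let C₁, C₂ be the K×N matrices whose l-th column equals κ₁ and κ₂ respectively and whose other columns vanish. For α ∈ {1, 2}, let H̊_α be the (N+K)×N matrix obtained by stacking E_α on top of C_α, and let Γ be the complex matrix indexed by (Fin 2 × Fin N) × (Fin 2 × Fin N) whose (α, β) block (an N×N matrix) equals (H̊_α)*·H̊_β / (λ_β − conj(λ_α)). If Γ is invertible, then the N×N matrix Σ_{α,β ∈ Fin 2} E_α · (Γ⁻¹)_{αβ} · (E_β)* is diagonal (where (Γ⁻¹)_{αβ} denotes the (α, β) N×N block of Γ⁻¹); in particular its commutator with every diagonal N×N matrix J vanishes. -/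
open Matrix

/-- When `l_α = l_β`, the matrix `Σ E_α (Γ⁻¹)_{αβ} E_β*` is diagonal, hence
`U^{[m]} = 0`. -/
theorem stmt_11 (N K : ℕ) (hN : 1 ≤ N) (hK : 1 ≤ K)
    (lam : Fin 2 → ℂ) (hlam : ∀ α β : Fin 2, lam β ≠ starRingEnd ℂ (lam α))
    (E : Fin 2 → Matrix (Fin N) (Fin N) ℂ)
    (hEd : ∀ α, (E α).IsDiag) (hEu : ∀ α, IsUnit (E α))
    (l : Fin N) (κ : Fin 2 → Fin K → ℂ)
    (C : Fin 2 → Matrix (Fin K) (Fin N) ℂ)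
    (hC : ∀ α i j, C α i j = if j = l then κ α i else 0)
    (H : Fin 2 → Matrix (Fin N ⊕ Fin K) (Fin N) ℂ)
    (hH : ∀ α, H α = Matrix.fromRows (E α) (C α))
    (Γ : Matrix (Fin 2 × Fin N) (Fin 2 × Fin N) ℂ)
    (hΓ : ∀ (α β : Fin 2) (i j : Fin N),
      Γ (α, i) (β, j) = ((H α)ᴴ * H β) i j / (lam β - starRingEnd ℂ (lam α)))
    (hΓu : IsUnit Γ) :
    (∑ α : Fin 2, ∑ β : Fin 2,
        E α * (Matrix.of fun i j => Γ⁻¹ (α, i) (β, j)) * (E β)ᴴ).IsDiag ∧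
      ∀ J : Matrix (Fin N) (Fin N) ℂ, J.IsDiag →
        (∑ α : Fin 2, ∑ β : Fin 2,
            E α * (Matrix.of fun i j => Γ⁻¹ (α, i) (β, j)) * (E β)ᴴ) * J
          - J * (∑ α : Fin 2, ∑ β : Fin 2,
            E α * (Matrix.of fun i j => Γ⁻¹ (α, i) (β, j)) * (E β)ᴴ) = 0 := by
  -- Step 1: Γ vanishes when the `Fin N` indices differ.
  have hΓ0 : ∀ (α β : Fin 2) (i j : Fin N), i ≠ j → Γ (α, i) (β, j) = 0 := by
    intro α β i j hij
    rw [hΓ]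
    have hnum : ((H α)ᴴ * H β) i j = 0 := by
      rw [hH, hH]
      simp only [Matrix.mul_apply, conjTranspose_apply, Fintype.sum_sum_type,
        fromRows_apply_inl, fromRows_apply_inr]
      rw [Finset.sum_eq_zero, Finset.sum_eq_zero, add_zero]
      · intro k _
        rw [hC, hC]
        by_cases hi : i = l
        · have hj : j ≠ l := fun h => hij (hi.trans h.symm)
          simp [hj]
        · simp [hi]
      · intro n _
        by_cases hn : n = i
        · subst hn
          rw [hEd β hij, mul_zero]
        · rw [hEd α hn, star_zero, zero_mul]
    rw [hnum, zero_div]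
  -- The diagonal "index marker" matrix.
  set Δ : Matrix (Fin 2 × Fin N) (Fin 2 × Fin N) ℂ :=
    Matrix.diagonal (fun p => ((p.2 : ℕ) : ℂ)) with hΔ
  have hcom : Γ * Δ = Δ * Γ := by
    ext ⟨α, i⟩ ⟨β, j⟩
    rw [hΔ, Matrix.mul_diagonal, Matrix.diagonal_mul]
    by_cases hij : i = j
    · subst hij; ring
    · rw [hΓ0 α β i j hij, zero_mul, mul_zero]
  have hdet : IsUnit Γ.det := (Matrix.isUnit_iff_isUnit_det Γ).mp hΓu
  have h1 : Γ⁻¹ * Γ = 1 := Matrix.nonsing_inv_mul Γ hdet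
  have h2 : Γ * Γ⁻¹ = 1 := Matrix.mul_nonsing_inv Γ hdet
  have hcom' : Γ⁻¹ * Δ = Δ * Γ⁻¹ := by
    have h3 : Γ⁻¹ * (Γ * Δ) * Γ⁻¹ = Γ⁻¹ * (Δ * Γ) * Γ⁻¹ := by rw [hcom]
    simp only [← mul_assoc] at h3
    rw [h1, one_mul] at h3
    rw [mul_assoc, h2, mul_one] at h3
    exact h3.symm
  -- Step 2: Γ⁻¹ vanishes when the `Fin N` indices differ.
  have hG0 : ∀ (α β : Fin 2) (i j : Fin N), i ≠ j → Γ⁻¹ (α, i) (β, j) = 0 := by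
    intro α β i j hij
    have := congrFun (congrFun hcom' (α, i)) (β, j)
    rw [hΔ, Matrix.mul_diagonal, Matrix.diagonal_mul] at this
    have hcast : ((j : ℕ) : ℂ) ≠ ((i : ℕ) : ℂ) := by
      simp only [Ne, Nat.cast_inj]
      exact fun h => hij (Fin.ext h.symm)
    have hsub : Γ⁻¹ (α, i) (β, j) * (((j : ℕ) : ℂ) - ((i : ℕ) : ℂ)) = 0 := by
      rw [mul_sub, this, mul_comm, sub_self]
    rcases mul_eq_zero.mp hsub with h | h
    · exact h
    · exact absurd (sub_eq_zero.mp h) hcast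
  -- Step 3: each summand vanishes off the diagonal.
  have hS : ∀ (α β : Fin 2) (i j : Fin N), i ≠ j →
      (E α * (Matrix.of fun i j => Γ⁻¹ (α, i) (β, j)) * (E β)ᴴ) i j = 0 := by
    intro α β i j hij
    rw [Matrix.mul_apply]
    apply Finset.sum_eq_zero
    intro m _
    by_cases hm : m = j
    · subst hm
      rw [Matrix.mul_apply, Finset.sum_eq_zero, zero_mul]
      intro k _
      by_cases hk : k = i
      · subst hk
        rw [Matrix.of_apply, hG0 α β k m hij, mul_zero]
      · rw [hEd α (fun h => hk h.symm), zero_mul]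
    · rw [conjTranspose_apply, hEd β (fun h => hm h.symm), star_zero, mul_zero]
  have hSdiag : (∑ α : Fin 2, ∑ β : Fin 2,
      E α * (Matrix.of fun i j => Γ⁻¹ (α, i) (β, j)) * (E β)ᴴ).IsDiag := by
    intro i j hij
    rw [Matrix.sum_apply]
    apply Finset.sum_eq_zero
    intro α _
    rw [Matrix.sum_apply]
    exact Finset.sum_eq_zero fun β _ => hS α β i j hij
  refine ⟨hSdiag, fun J hJ => ?_⟩
  rw [sub_eq_zero, ← hSdiag.diagonal_diag, ← hJ.diagonal_diag,
    Matrix.diagonal_mul_diagonal, Matrix.diagonal_mul_diagonal]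
  ext i j
  by_cases h : i = j
  · subst h
    simp [Matrix.diagonal_apply_eq, mul_comm]
  · simp [Matrix.diagonal_apply_ne _ h]
end

section
/- Let N, K ≥ 1, let π, λ₀ ∈ ℂ and κ ∈ ℂ^K (viewed as a K×1 column matrix), and set Δ = exp(π + conj(π)) + κ*κ (a positive real number). Let D be the N×N diagonal matrix with (1,1) entry exp(π) and all other diagonal entries 1, let C be the K×N matrix whose first column is κ and whose other columns vanish, and let H = fromBlocks D (−(D*)⁻¹·C*) C I_K and Λ = fromBlocks (λ₀·I_N) 0 0 (conj(λ₀)·I_K). Then H is invertible and H·Λ·H⁻¹ = (1/Δ)·S, where S is the (N+K)×(N+K) matrix whose top-left N×N block is the diagonal matrix with (1,1) entry conj(λ₀)·Δ + (λ₀ − conj(λ₀))·exp(π + conj(π)) and remaining diagonal entries λ₀·Δ; whose top-right N×K block has first row (λ₀ − conj(λ₀))·exp(π)·κ* and all other rows zero; whose bottom-left K×N block has first column (λ₀ − conj(λ₀))·exp(conj(π))·κ and all other columns zero; and whose bottom-right K×K block is conj(λ₀)·Δ·I_K + (λ₀ − conj(λ₀))·κ·κ*. -/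
open Matrix Complex

/-!
Put `W = fromRows D C`. The second block column of `H` is orthogonal to `W`: `Wᴴ H = [WᴴW | 0]`.
Hence `H · fromBlocks 1 0 0 0 · H⁻¹ = W (WᴴW)⁻¹ Wᴴ` is the orthogonal projection onto the column
space of `W`, and since `Λ = conj λ₀ • 1 + (λ₀ - conj λ₀) • fromBlocks 1 0 0 0`, conjugating `Λ`
by `H` gives `conj λ₀ • 1 + (λ₀ - conj λ₀) • W (WᴴW)⁻¹ Wᴴ`. For the given `D` and `C` the Gram
matrix `WᴴW = DᴴD + CᴴC` is `diagonal (Δ, 1, …, 1)`; it is positive definite, so `Δ ≠ 0` and `H`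
is invertible, and the entries of `S` are read off from `W (WᴴW)⁻¹ Wᴴ`.
-/

namespace Matrix

variable {m n 𝕜 : Type*} [Fintype m] [Fintype n] [DecidableEq n]

theorem posDef_conjTranspose_fromRows_mul_fromRows [Field 𝕜] [PartialOrder 𝕜] [StarRing 𝕜]
    [StarOrderedRing 𝕜] {D : Matrix n n 𝕜} (hD : IsUnit D) (C : Matrix m n 𝕜) :
    ((fromRows D C)ᴴ * fromRows D C).PosDef := by
  refine .conjTranspose_mul_self _ fun v w hvw => ?_
  rw [fromRows_mulVec, fromRows_mulVec] at hvw
  exact mulVec_injective_iff_isUnit.2 hD (Sum.elim_eq_iff.mp hvw).1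

variable [DecidableEq m] [Field 𝕜] [StarRing 𝕜] {D : Matrix n n 𝕜} (C : Matrix m n 𝕜)

theorem conjTranspose_fromRows_mul_fromBlocks (hD : IsUnit D) :
    (fromRows D C)ᴴ * fromBlocks D (-((Dᴴ)⁻¹ * Cᴴ)) C 1
      = fromCols ((fromRows D C)ᴴ * fromRows D C) 0 := by
  rw [conjTranspose_fromRows_eq_fromCols_conjTranspose, fromCols_mul_fromBlocks,
    fromCols_mul_fromRows, Matrix.mul_neg, ← Matrix.mul_assoc,
    mul_nonsing_inv _ ((isUnit_iff_isUnit_det _).1 ((isUnit_conjTranspose D).2 hD)),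
    Matrix.one_mul, Matrix.mul_one, neg_add_cancel]

theorem det_fromBlocks_neg_inv_conjTranspose_mul (hD : IsUnit D) :
    (fromBlocks D (-((Dᴴ)⁻¹ * Cᴴ)) C 1).det
      = (Dᴴ)⁻¹.det * ((fromRows D C)ᴴ * fromRows D C).det := by
  rw [det_fromBlocks_one₂₂, ← det_mul, conjTranspose_fromRows_eq_fromCols_conjTranspose,
    fromCols_mul_fromRows, Matrix.mul_add, ← Matrix.mul_assoc,
    nonsing_inv_mul _ ((isUnit_iff_isUnit_det _).1 ((isUnit_conjTranspose D).2 hD)), Matrix.one_mul,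
    sub_eq_add_neg, Matrix.neg_mul, neg_neg, Matrix.mul_assoc]

theorem isUnit_fromBlocks_neg_inv_conjTranspose_mul (hD : IsUnit D)
    (hG : IsUnit ((fromRows D C)ᴴ * fromRows D C)) :
    IsUnit (fromBlocks D (-((Dᴴ)⁻¹ * Cᴴ)) C 1) := by
  rw [isUnit_iff_isUnit_det, det_fromBlocks_neg_inv_conjTranspose_mul C hD]
  exact (isUnit_nonsing_inv_det _ ((isUnit_iff_isUnit_det _).1 ((isUnit_conjTranspose D).2 hD))).mul
    ((isUnit_iff_isUnit_det _).1 hG)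

theorem conj_fromBlocks_one_zero (hD : IsUnit D) (hG : IsUnit ((fromRows D C)ᴴ * fromRows D C)) :
    fromBlocks D (-((Dᴴ)⁻¹ * Cᴴ)) C 1 * fromBlocks 1 0 0 0 * (fromBlocks D (-((Dᴴ)⁻¹ * Cᴴ)) C 1)⁻¹
      = fromRows D C * ((fromRows D C)ᴴ * fromRows D C)⁻¹ * (fromRows D C)ᴴ := by
  have hH := (isUnit_iff_isUnit_det _).1 (isUnit_fromBlocks_neg_inv_conjTranspose_mul C hD hG)
  have h_intertwine : fromRows D C * ((fromRows D C)ᴴ * fromRows D C)⁻¹ * (fromRows D C)ᴴ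
      * fromBlocks D (-((Dᴴ)⁻¹ * Cᴴ)) C 1
      = fromBlocks D (-((Dᴴ)⁻¹ * Cᴴ)) C 1 * fromBlocks 1 0 0 0 := by
    rw [Matrix.mul_assoc, conjTranspose_fromRows_mul_fromBlocks C hD, mul_fromCols,
      nonsing_inv_mul_cancel_right _ _ ((isUnit_iff_isUnit_det _).1 hG), Matrix.mul_zero,
      fromBlocks_multiply, ← fromRows_zero, fromCols_fromRows_eq_fromBlocks]
    simp
  rw [← h_intertwine, mul_nonsing_inv_cancel_right _ _ hH]

theorem conj_fromBlocks_smul_one (hD : IsUnit D) (hG : IsUnit ((fromRows D C)ᴴ * fromRows D C))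
    (a b : 𝕜) :
    fromBlocks D (-((Dᴴ)⁻¹ * Cᴴ)) C 1 * fromBlocks (a • 1) 0 0 (b • 1)
        * (fromBlocks D (-((Dᴴ)⁻¹ * Cᴴ)) C 1)⁻¹
      = b • 1 + (a - b) •
          (fromRows D C * ((fromRows D C)ᴴ * fromRows D C)⁻¹ * (fromRows D C)ᴴ) := by
  have hH := (isUnit_iff_isUnit_det _).1 (isUnit_fromBlocks_neg_inv_conjTranspose_mul C hD hG)
  have hΛ : fromBlocks (a • 1 : Matrix n n 𝕜) 0 0 (b • 1 : Matrix m m 𝕜)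
      = b • 1 + (a - b) • fromBlocks 1 0 0 0 := by
    rw [← fromBlocks_one, fromBlocks_smul, fromBlocks_smul, fromBlocks_add]
    congr 1 <;> module
  rw [hΛ, Matrix.mul_add, Matrix.add_mul, Matrix.mul_smul, Matrix.mul_smul, Matrix.smul_mul,
    Matrix.smul_mul, Matrix.mul_one, mul_nonsing_inv _ hH, conj_fromBlocks_one_zero C hD hG]

end Matrix

section RankOne

variable {m n 𝕜 : Type*} [Fintype n] [DecidableEq n] [Field 𝕜] [StarRing 𝕜]
  {i₀ : n} {d : 𝕜} {κ : Matrix m (Fin 1) 𝕜} {D : Matrix n n 𝕜} {C : Matrix m n 𝕜}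

theorem conjTranspose_fromRows_mul_fromRows_eq_diagonal [Fintype m]
    (hD : D = diagonal fun i => if i = i₀ then d else 1)
    (hC : C = of fun k j => if j = i₀ then κ k 0 else 0) :
    (fromRows D C)ᴴ * fromRows D C
      = diagonal fun i => if i = i₀ then star d * d + (κᴴ * κ) 0 0 else 1 := by
  subst hD hC
  rw [conjTranspose_fromRows_eq_fromCols_conjTranspose, fromCols_mul_fromRows,
    diagonal_conjTranspose, diagonal_mul_diagonal]
  ext i j
  simp only [Matrix.add_apply, mul_apply, conjTranspose_apply, of_apply, diagonal_apply]
  split_ifs <;> simp_all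

variable [DecidableEq m]

theorem smul_one_add_smul_fromRows_mul_diagonal_mul_conjTranspose
    (hD : D = diagonal fun i => if i = i₀ then d else 1)
    (hC : C = of fun k j => if j = i₀ then κ k 0 else 0) {Δ : 𝕜} (hΔ : Δ ≠ 0) (a b : 𝕜) :
    b • 1 + (a - b) •
        (fromRows D C * diagonal (fun i => if i = i₀ then Δ⁻¹ else 1) * (fromRows D C)ᴴ)
      = Δ⁻¹ • fromBlocks
        (diagonal fun i => if i = i₀ then b * Δ + (a - b) * (d * star d) else a * Δ)
        (of fun i k => if i = i₀ then (a - b) * d * star (κ k 0) else 0)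
        (of fun k j => if j = i₀ then (a - b) * star d * κ k 0 else 0)
        ((b * Δ) • 1 + (a - b) • (κ * κᴴ)) := by
  subst hD hC
  rw [conjTranspose_fromRows_eq_fromCols_conjTranspose, fromRows_mul, fromRows_mul_fromCols,
    ← fromBlocks_one, fromBlocks_smul, fromBlocks_smul, fromBlocks_smul, fromBlocks_add,
    fromBlocks_inj, diagonal_conjTranspose, diagonal_mul_diagonal, diagonal_mul_diagonal]
  refine ⟨?_, ?_, ?_, ?_⟩
  · rw [← diagonal_one, ← diagonal_smul, ← diagonal_smul, ← diagonal_smul, diagonal_add]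
    congr 1
    funext i
    simp only [Pi.smul_apply, Pi.star_apply, smul_eq_mul]
    split_ifs
    · field_simp
    · simp only [star_one, mul_one]
      field_simp
      ring
  · ext i k
    by_cases hi : i = i₀
    · simp only [hi, Matrix.add_apply, Matrix.smul_apply, diagonal_mul, conjTranspose_apply,
        of_apply, if_true, Matrix.zero_apply, smul_zero, zero_add, smul_eq_mul]
      ring
    · simp [diagonal_mul, hi]
  · ext k j
    by_cases hj : j = i₀
    · simp only [hj, Matrix.add_apply, Matrix.smul_apply, mul_diagonal, Pi.star_apply, of_apply,
        if_true, Matrix.zero_apply, smul_zero, zero_add, smul_eq_mul]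
      ring
    · simp [mul_diagonal, hj]
  · ext k k'
    simp only [Matrix.add_apply, Matrix.smul_apply, mul_apply, of_apply, conjTranspose_apply,
      smul_eq_mul]
    rw [Finset.sum_eq_single i₀ (fun j _ hj => by simp [hj]) (by simp)]
    simp only [ite_mul, zero_mul, Finset.sum_ite_eq', Finset.mem_univ, if_true, diagonal_apply_eq,
      Finset.univ_unique, Fin.default_eq_zero, Finset.sum_singleton]
    field_simp

end RankOne

theorem isUnit_and_conj_fromBlocks_smul_one_eq {m n : Type*} [Fintype m] [Fintype n]
    [DecidableEq m] [DecidableEq n] {i₀ : n} {d Δ : ℂ} {κ : Matrix m (Fin 1) ℂ}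
    {D : Matrix n n ℂ} {C : Matrix m n ℂ} (hd : d ≠ 0)
    (hΔ : Δ = d * star d + (κᴴ * κ) 0 0)
    (hD : D = diagonal fun i => if i = i₀ then d else 1)
    (hC : C = of fun k j => if j = i₀ then κ k 0 else 0) (a b : ℂ) :
    IsUnit (fromBlocks D (-((Dᴴ)⁻¹ * Cᴴ)) C 1) ∧
      fromBlocks D (-((Dᴴ)⁻¹ * Cᴴ)) C 1 * fromBlocks (a • 1) 0 0 (b • 1)
          * (fromBlocks D (-((Dᴴ)⁻¹ * Cᴴ)) C 1)⁻¹
        = Δ⁻¹ • fromBlocks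
          (diagonal fun i => if i = i₀ then b * Δ + (a - b) * (d * star d) else a * Δ)
          (of fun i k => if i = i₀ then (a - b) * d * star (κ k 0) else 0)
          (of fun k j => if j = i₀ then (a - b) * star d * κ k 0 else 0)
          ((b * Δ) • 1 + (a - b) • (κ * κᴴ)) := by
  have hDunit : IsUnit D := by
    rw [hD, isUnit_diagonal, Pi.isUnit_iff]
    intro i
    split_ifs <;> simp [hd]
  have hG : (fromRows D C)ᴴ * fromRows D C = diagonal fun i => if i = i₀ then Δ else 1 := by
    rw [conjTranspose_fromRows_mul_fromRows_eq_diagonal hD hC, hΔ, mul_comm d]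
  have hGunit : IsUnit ((fromRows D C)ᴴ * fromRows D C) := by
    open scoped ComplexOrder in exact (posDef_conjTranspose_fromRows_mul_fromRows hDunit C).isUnit
  have hΔ0 : Δ ≠ 0 := by
    rw [hG, isUnit_diagonal, Pi.isUnit_iff] at hGunit
    simpa using hGunit i₀
  have hGinv :
      ((fromRows D C)ᴴ * fromRows D C)⁻¹ = diagonal fun i => if i = i₀ then Δ⁻¹ else 1 := by
    rw [hG]
    refine inv_eq_left_inv ?_
    rw [diagonal_mul_diagonal, ← diagonal_one]
    congr 1
    funext i
    split_ifs <;> simp [hΔ0]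
  refine ⟨isUnit_fromBlocks_neg_inv_conjTranspose_mul C hDunit hGunit, ?_⟩
  rw [conj_fromBlocks_smul_one C hDunit hGunit, hGinv,
    smul_one_add_smul_fromRows_mul_diagonal_mul_conjTranspose hD hC hΔ0]

theorem stmt_15_general (N K : ℕ) (hN : 1 ≤ N)
    (π₀ lam0 : ℂ) (κ : Matrix (Fin K) (Fin 1) ℂ)
    (Δ : ℂ) (hΔ : Δ = Complex.exp (π₀ + starRingEnd ℂ π₀) + (κᴴ * κ) 0 0)
    (D : Matrix (Fin N) (Fin N) ℂ)
    (hD : D = Matrix.diagonal fun i : Fin N =>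
      if (i : ℕ) = 0 then Complex.exp π₀ else 1)
    (C : Matrix (Fin K) (Fin N) ℂ)
    (hC : ∀ i j, C i j = if (j : ℕ) = 0 then κ i 0 else 0)
    (H : Matrix (Fin N ⊕ Fin K) (Fin N ⊕ Fin K) ℂ)
    (hH : H = Matrix.fromBlocks D (-((Dᴴ)⁻¹ * Cᴴ)) C (1 : Matrix (Fin K) (Fin K) ℂ))
    (Λ : Matrix (Fin N ⊕ Fin K) (Fin N ⊕ Fin K) ℂ)
    (hΛ : Λ = Matrix.fromBlocks (lam0 • (1 : Matrix (Fin N) (Fin N) ℂ)) 0 0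
      (starRingEnd ℂ lam0 • (1 : Matrix (Fin K) (Fin K) ℂ)))
    (S : Matrix (Fin N ⊕ Fin K) (Fin N ⊕ Fin K) ℂ)
    (hS : S = Matrix.fromBlocks
      (Matrix.diagonal fun i : Fin N => if (i : ℕ) = 0 then
          starRingEnd ℂ lam0 * Δ
            + (lam0 - starRingEnd ℂ lam0) * Complex.exp (π₀ + starRingEnd ℂ π₀)
        else lam0 * Δ)
      (Matrix.of fun (i : Fin N) (k : Fin K) => if (i : ℕ) = 0 then
          (lam0 - starRingEnd ℂ lam0) * Complex.exp π₀ * starRingEnd ℂ (κ k 0)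
        else 0)
      (Matrix.of fun (k : Fin K) (j : Fin N) => if (j : ℕ) = 0 then
          (lam0 - starRingEnd ℂ lam0) * Complex.exp (starRingEnd ℂ π₀) * κ k 0
        else 0)
      ((starRingEnd ℂ lam0 * Δ) • (1 : Matrix (Fin K) (Fin K) ℂ)
        + (lam0 - starRingEnd ℂ lam0) • (κ * κᴴ))) :
    IsUnit H ∧ H * Λ * H⁻¹ = Δ⁻¹ • S := by
  set i₀ : Fin N := ⟨0, hN⟩
  have hi₀ : ∀ i : Fin N, (i : ℕ) = 0 ↔ i = i₀ := fun i => by simp [i₀, Fin.ext_iff]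
  simp only [hi₀] at hD hS
  have hC' : C = of fun k j => if j = i₀ then κ k 0 else 0 := by ext k j; simp [hC, hi₀]
  rw [exp_add, Complex.exp_conj] at hΔ hS
  subst hH hΛ hS
  exact isUnit_and_conj_fromBlocks_smul_one_eq (exp_ne_zero π₀) hΔ hD hC' lam0 (starRingEnd ℂ lam0)

/-- The conjugation `H Λ H⁻¹` when `ρ_α = 0`, `l_α = 1`. -/
theorem stmt_15 (N K : ℕ) (hN : 1 ≤ N) (hK : 1 ≤ K)
    (π₀ lam0 : ℂ) (κ : Matrix (Fin K) (Fin 1) ℂ)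
    (Δ : ℂ) (hΔ : Δ = Complex.exp (π₀ + starRingEnd ℂ π₀) + (κᴴ * κ) 0 0)
    (D : Matrix (Fin N) (Fin N) ℂ)
    (hD : D = Matrix.diagonal fun i : Fin N =>
      if (i : ℕ) = 0 then Complex.exp π₀ else 1)
    (C : Matrix (Fin K) (Fin N) ℂ)
    (hC : ∀ i j, C i j = if (j : ℕ) = 0 then κ i 0 else 0)
    (H : Matrix (Fin N ⊕ Fin K) (Fin N ⊕ Fin K) ℂ)
    (hH : H = Matrix.fromBlocks D (-((Dᴴ)⁻¹ * Cᴴ)) C (1 : Matrix (Fin K) (Fin K) ℂ))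
    (Λ : Matrix (Fin N ⊕ Fin K) (Fin N ⊕ Fin K) ℂ)
    (hΛ : Λ = Matrix.fromBlocks (lam0 • (1 : Matrix (Fin N) (Fin N) ℂ)) 0 0
      (starRingEnd ℂ lam0 • (1 : Matrix (Fin K) (Fin K) ℂ)))
    (S : Matrix (Fin N ⊕ Fin K) (Fin N ⊕ Fin K) ℂ)
    (hS : S = Matrix.fromBlocks
      (Matrix.diagonal fun i : Fin N => if (i : ℕ) = 0 then
          starRingEnd ℂ lam0 * Δ
            + (lam0 - starRingEnd ℂ lam0) * Complex.exp (π₀ + starRingEnd ℂ π₀)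
        else lam0 * Δ)
      (Matrix.of fun (i : Fin N) (k : Fin K) => if (i : ℕ) = 0 then
          (lam0 - starRingEnd ℂ lam0) * Complex.exp π₀ * starRingEnd ℂ (κ k 0)
        else 0)
      (Matrix.of fun (k : Fin K) (j : Fin N) => if (j : ℕ) = 0 then
          (lam0 - starRingEnd ℂ lam0) * Complex.exp (starRingEnd ℂ π₀) * κ k 0
        else 0)
      ((starRingEnd ℂ lam0 * Δ) • (1 : Matrix (Fin K) (Fin K) ℂ)
        + (lam0 - starRingEnd ℂ lam0) • (κ * κᴴ))) :
    IsUnit H ∧ H * Λ * H⁻¹ = Δ⁻¹ • S :=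
  stmt_15_general N K hN π₀ lam0 κ Δ hΔ D hD C hC H hH Λ hΛ S hS
end
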